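/- The Dini condition holds for all planar convex domains (Proposition 7.2): Let Ω ⊆ ℝ² be a nonempty open bounded convex set. Then there exists a finite constant C* such that for every x ∈ ∂Ω, ∫₀¹ M_x(t)/t² dt ≤ C*. -/

import Mathlib

open Set
open scoped RealInnerProductSpace

noncomputable section

/-- A unit vector `ν` is an outer supporting normal of `Ω` at `y` if
`⟨ν, z − y⟩ ≤ 0` for all `z ∈ Ω`. -/
def IsOuterNormal {E : Type*} [NormedAddCommGroup E] [InnerProductSpace ℝ E]
    (Ω : Set E) (y ν : E) : Prop :=
  ‖ν‖ = 1 ∧ ∀ z ∈ Ω, ⟪ν, z - y⟫ ≤ 0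

/-- `M_x(t) = sup {⟨ν, y − x⟩ : y ∈ ∂Ω, 0 < ‖y − x‖ ≤ t, ν an outer supporting normal at y}`
(`sSup ∅ = 0` in `ℝ`, so the empty case gives `0`). -/
noncomputable def Mfun {E : Type*} [NormedAddCommGroup E] [InnerProductSpace ℝ E]
    (Ω : Set E) (x : E) (t : ℝ) : ℝ :=
  sSup {m : ℝ | ∃ y ν : E, y ∈ frontier Ω ∧ 0 < ‖y - x‖ ∧ ‖y - x‖ ≤ t ∧
    IsOuterNormal Ω y ν ∧ m = ⟪ν, y - x⟫}

/-- The rescaled spherical slice `V_t = {ω ∈ 𝕊^{n−1} : t·ω ∈ Ω}`. -/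
def Vslice {E : Type*} [NormedAddCommGroup E] [InnerProductSpace ℝ E]
    (Ω : Set E) (t : ℝ) : Set E :=
  {ω | ‖ω‖ = 1 ∧ t • ω ∈ Ω}

/-- `S_c = {t ∈ (0,1) : M₀(s) ≤ c·s for all s ∈ [t/4, 4t]}`. -/
def Sset {E : Type*} [NormedAddCommGroup E] [InnerProductSpace ℝ E]
    (Ω : Set E) (c : ℝ) : Set ℝ :=
  {t | t ∈ Ioo (0:ℝ) 1 ∧ ∀ s ∈ Icc (t/4) (4*t), Mfun Ω 0 s ≤ c * s}

/-- Cap hypothesis: the slice `V₁` contains the geodesic cap of radius `rstar` around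
the unit vector `e`. -/
def CapHyp {E : Type*} [NormedAddCommGroup E] [InnerProductSpace ℝ E]
    (Ω : Set E) (e : E) (rstar : ℝ) : Prop :=
  ‖e‖ = 1 ∧ ∀ ω : E, ‖ω‖ = 1 → Real.cos rstar < ⟪ω, e⟫ → ω ∈ Vslice Ω 1

open MeasureTheory

/-!
Fix `x ∈ ∂Ω`, a ball `B(z₀, ρ) ⊆ Ω` and `R` with `Ω ⊆ B̄(z₀, R)`, and use coordinates `(s, η)`
centred at `x`, with `η` measured along `z₀ - x`. A supporting line at `y` whose normal `ν` has
`⟨ν, y - x⟩ ≤ ρ / 2` keeps `B(z₀, ρ)` on its inner side, so `⟨ν, z₀ - x⟩ ≤ -ρ/2`: in these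
coordinates the line has slope `q` with `|q| ≤ 2R/ρ`, and `⟨ν, y - x⟩` is at most the depth
`q s - η` at which it meets the `η`-axis.

On each side of `x` let `ψ(τ)` be the largest such depth over contact points with `0 < s ≤ τ`,
and `G(τ)` the largest such slope. Comparing with the steepest supporting line at the lowest
point of `Ω̄` over `s = τ/2` gives `ψ(τ) ≤ ψ(τ/2) + τ (G(τ) - G(τ/2))`, so `∑ 2^k ψ(2^-k)`
telescopes to `O(R/ρ)`. Splitting `(0, 1)` dyadically then bounds `∫ M_x(t)/t² dt` uniformly in
`x`; normals with `⟨ν, y - x⟩ > ρ/2` occur only for `t > ρ/2` and add `O(1/ρ)`.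
-/

theorem sum_range_le_of_le_half_succ_add {a g : ℕ → ℝ} {A B : ℝ} (n : ℕ) (ha : 0 ≤ a 0)
    (hstep : ∀ k, a k ≤ a (k + 1) / 2 + (g k - g (k + 1))) (hA : a n ≤ A)
    (hB : g 0 - g n ≤ B) : ∑ k ∈ Finset.range n, a k ≤ A + 2 * B := by
  have hsum : ∑ k ∈ Finset.range n, a k ≤
      (∑ k ∈ Finset.range n, a (k + 1)) / 2 + (g 0 - g n) := by
    rw [Finset.sum_div, ← Finset.sum_range_sub' g n, ← Finset.sum_add_distrib]
    exact Finset.sum_le_sum fun k _ ↦ hstep k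
  have hshift : ∑ k ∈ Finset.range n, a (k + 1) = ∑ k ∈ Finset.range n, a k + a n - a 0 := by
    rw [← Finset.sum_range_succ, Finset.sum_range_succ']
    ring
  linarith

theorem lintegral_Ioo_div_sq_le {f : ℝ → ℝ} {b : ℕ → ℝ} {S : ℝ} (hb : ∀ k, 0 ≤ b k)
    (hf : ∀ k t, 0 < t → t ≤ (1 / 2) ^ k → f t ≤ b k)
    (hS : ∀ n, ∑ k ∈ Finset.range n, 2 ^ k * b k ≤ S) :
    ∫⁻ t in Ioo 0 1, ENNReal.ofReal (f t / t ^ 2) ≤ ENNReal.ofReal (2 * S) := by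
  have hcover : Ioo (0 : ℝ) 1 ⊆ ⋃ k : ℕ, Ioc ((1 / 2) ^ (k + 1)) ((1 / 2) ^ k) := fun t ht ↦
    mem_iUnion.2 (exists_nat_pow_near_of_lt_one ht.1 ht.2.le (by norm_num) (by norm_num))
  have hpoint : ∀ k, ∀ t ∈ Ioc ((1 / 2 : ℝ) ^ (k + 1)) ((1 / 2) ^ k),
      f t / t ^ 2 ≤ 4 ^ (k + 1) * b k := by
    rintro k t ⟨ht₁, ht₂⟩
    have ht : 0 < t := lt_trans (by positivity) ht₁
    calc f t / t ^ 2 ≤ b k / t ^ 2 := by gcongr; exact hf k t ht ht₂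
      _ ≤ b k / ((1 / 2) ^ (k + 1)) ^ 2 := by gcongr; exact hb k
      _ = 4 ^ (k + 1) * b k := by
        rw [show (4 : ℝ) = 2 * 2 by norm_num, mul_pow]; simp only [one_div, inv_pow]; field_simp
  have hpiece : ∀ k : ℕ, ∫⁻ t in Ioc ((1 / 2 : ℝ) ^ (k + 1)) ((1 / 2) ^ k),
      ENNReal.ofReal (f t / t ^ 2) ≤ ENNReal.ofReal (2 ^ (k + 1) * b k) := fun k ↦
    calc _ ≤ ∫⁻ _ in Ioc ((1 / 2 : ℝ) ^ (k + 1)) ((1 / 2) ^ k),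
          ENNReal.ofReal (4 ^ (k + 1) * b k) :=
          setLIntegral_mono' measurableSet_Ioc fun t ht ↦ ENNReal.ofReal_le_ofReal (hpoint k t ht)
      _ = ENNReal.ofReal (4 ^ (k + 1) * b k * ((1 / 2) ^ k - (1 / 2) ^ (k + 1))) := by
          rw [setLIntegral_const, Real.volume_Ioc,
            ← ENNReal.ofReal_mul (by have := hb k; positivity)]
      _ = ENNReal.ofReal (2 ^ (k + 1) * b k) := by
          congr 1
          rw [show (4 : ℝ) = 2 * 2 by norm_num, mul_pow]
          simp only [one_div, inv_pow]
          field_simp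
          ring
  calc ∫⁻ t in Ioo 0 1, ENNReal.ofReal (f t / t ^ 2)
      ≤ ∫⁻ t in ⋃ k : ℕ, Ioc ((1 / 2) ^ (k + 1)) ((1 / 2) ^ k), ENNReal.ofReal (f t / t ^ 2) :=
        lintegral_mono_set hcover
    _ ≤ ∑' k : ℕ, ∫⁻ t in Ioc ((1 / 2 : ℝ) ^ (k + 1)) ((1 / 2) ^ k),
          ENNReal.ofReal (f t / t ^ 2) := lintegral_iUnion_le _ _
    _ ≤ ∑' k : ℕ, ENNReal.ofReal (2 ^ (k + 1) * b k) := ENNReal.tsum_le_tsum hpiece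
    _ ≤ ENNReal.ofReal (2 * S) := ENNReal.tsum_le_of_sum_range_le fun n ↦ by
        rw [← ENNReal.ofReal_sum_of_nonneg fun k _ ↦ by have := hb k; positivity]
        refine ENNReal.ofReal_le_ofReal ?_
        have h := mul_le_mul_of_nonneg_left (hS n) zero_le_two
        rw [Finset.mul_sum] at h
        exact (Finset.sum_congr rfl fun k _ ↦ by ring).trans_le h

section LowerSupport

variable {K : Set (ℝ × ℝ)} {Q q₀ q r P τ σ : ℝ} {p a b y : ℝ × ℝ}

def IsLowerSupport (K : Set (ℝ × ℝ)) (q : ℝ) (p : ℝ × ℝ) : Prop :=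
  p ∈ K ∧ ∀ p' ∈ K, q * (p'.1 - p.1) ≤ p'.2 - p.2

/-- `q * p.1 - p.2` is the depth below the origin at which the supporting line of slope `q`
through `p` crosses the vertical axis. -/
def gapSet (K : Set (ℝ × ℝ)) (Q τ : ℝ) : Set ℝ :=
  {v | ∃ q p, IsLowerSupport K q p ∧ |q| ≤ Q ∧ p.1 ∈ Ioc 0 τ ∧ v = q * p.1 - p.2}

def slopeSet (K : Set (ℝ × ℝ)) (Q q₀ τ : ℝ) : Set ℝ :=
  insert q₀ {q | ∃ p, IsLowerSupport K q p ∧ |q| ≤ Q ∧ p.1 ∈ Ioc 0 τ}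

def supGap (K : Set (ℝ × ℝ)) (Q τ : ℝ) : ℝ := sSup (gapSet K Q τ)

def supSlope (K : Set (ℝ × ℝ)) (Q q₀ τ : ℝ) : ℝ := sSup (slopeSet K Q q₀ τ)

theorem IsLowerSupport.le_of_fst_lt (hr : IsLowerSupport K r a) (hq : IsLowerSupport K q b)
    (hab : a.1 < b.1) : r ≤ q := by
  have h₁ := hr.2 b hq.1
  have h₂ := hq.2 a hr.1
  nlinarith

theorem IsLowerSupport.gap_nonneg (hq : IsLowerSupport K q p) (h0 : (0 : ℝ × ℝ) ∈ K) :
    0 ≤ q * p.1 - p.2 := by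
  have := hq.2 0 h0
  simp only [Prod.fst_zero, Prod.snd_zero] at this
  linarith

theorem le_of_mem_gapSet (h₀ : IsLowerSupport K q₀ 0) (hq₀ : |q₀| ≤ Q) {v : ℝ}
    (hv : v ∈ gapSet K Q τ) : v ≤ 2 * Q * τ := by
  obtain ⟨q, p, hq, hqQ, ⟨hp0, hpτ⟩, rfl⟩ := hv
  have hbase := h₀.2 p hq.1
  simp only [Prod.fst_zero, Prod.snd_zero, sub_zero] at hbase
  have hq' := abs_le.1 hqQ
  have hq₀' := abs_le.1 hq₀
  nlinarith

theorem bddAbove_gapSet (h₀ : IsLowerSupport K q₀ 0) (hq₀ : |q₀| ≤ Q) :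
    BddAbove (gapSet K Q τ) :=
  ⟨2 * Q * τ, fun _ ↦ le_of_mem_gapSet h₀ hq₀⟩

theorem supGap_nonneg (h0 : (0 : ℝ × ℝ) ∈ K) : 0 ≤ supGap K Q τ :=
  Real.sSup_nonneg fun _ ⟨_, _, hq, _, _, hv⟩ ↦ hv ▸ hq.gap_nonneg h0

theorem supGap_le (h₀ : IsLowerSupport K q₀ 0) (hq₀ : |q₀| ≤ Q) (hτ : 0 ≤ τ) :
    supGap K Q τ ≤ 2 * Q * τ :=
  Real.sSup_le (fun _ ↦ le_of_mem_gapSet h₀ hq₀)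
    (by have := (abs_nonneg q₀).trans hq₀; positivity)

theorem IsLowerSupport.gap_le_supGap (hq : IsLowerSupport K q p) (hqQ : |q| ≤ Q)
    (hp : p.1 ∈ Icc 0 τ) (h₀ : IsLowerSupport K q₀ 0) (hq₀ : |q₀| ≤ Q) :
    q * p.1 - p.2 ≤ supGap K Q τ := by
  rcases hp.1.eq_or_lt with hp0 | hp0
  · have hbase := h₀.2 p hq.1
    simp only [Prod.fst_zero, Prod.snd_zero, sub_zero, ← hp0, mul_zero] at hbase ⊢
    linarith [supGap_nonneg (Q := Q) (τ := τ) h₀.1]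
  · exact le_csSup (bddAbove_gapSet h₀ hq₀) ⟨q, p, hq, hqQ, ⟨hp0, hp.2⟩, rfl⟩

theorem le_of_mem_slopeSet (hq₀ : |q₀| ≤ Q) (hr : r ∈ slopeSet K Q q₀ τ) : r ≤ Q := by
  rcases hr with rfl | ⟨p, -, hrQ, -⟩
  exacts [(abs_le.1 hq₀).2, (abs_le.1 hrQ).2]

theorem bddAbove_slopeSet (hq₀ : |q₀| ≤ Q) : BddAbove (slopeSet K Q q₀ τ) :=
  ⟨Q, fun _ ↦ le_of_mem_slopeSet hq₀⟩

theorem le_supSlope (hq₀ : |q₀| ≤ Q) : q₀ ≤ supSlope K Q q₀ τ :=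
  le_csSup (bddAbove_slopeSet hq₀) (mem_insert _ _)

theorem IsLowerSupport.le_supSlope (hq : IsLowerSupport K q p) (hqQ : |q| ≤ Q)
    (hp : p.1 ∈ Ioc 0 τ) (hq₀ : |q₀| ≤ Q) : q ≤ supSlope K Q q₀ τ :=
  le_csSup (bddAbove_slopeSet hq₀) (Or.inr ⟨p, hq, hqQ, hp⟩)

theorem supSlope_le (hq₀ : |q₀| ≤ Q) : supSlope K Q q₀ τ ≤ Q :=
  csSup_le ⟨q₀, mem_insert _ _⟩ fun _ ↦ le_of_mem_slopeSet hq₀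

theorem supSlope_mono (hq₀ : |q₀| ≤ Q) {τ' : ℝ} (h : τ' ≤ τ) :
    supSlope K Q q₀ τ' ≤ supSlope K Q q₀ τ := by
  refine csSup_le_csSup (bddAbove_slopeSet hq₀) ⟨q₀, mem_insert _ _⟩ ?_
  rintro r (rfl | ⟨p, hr, hrQ, hp0, hpτ⟩)
  exacts [mem_insert _ _, Or.inr ⟨p, hr, hrQ, hp0, hpτ.trans h⟩]

def IsVerticalMin (K : Set (ℝ × ℝ)) (y : ℝ × ℝ) : Prop :=
  y ∈ K ∧ ∀ p ∈ K, p.1 = y.1 → y.2 ≤ p.2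

theorem IsVerticalMin.chord_slope_le (hK : Convex ℝ K) (hy : IsVerticalMin K y) (ha : a ∈ K)
    (hb : b ∈ K) (hay : a.1 < y.1) (hyb : y.1 < b.1) :
    (y.2 - a.2) * (b.1 - y.1) ≤ (b.2 - y.2) * (y.1 - a.1) := by
  have hd : 0 < b.1 - a.1 := by linarith
  set θ := (b.1 - y.1) / (b.1 - a.1)
  have hθd : θ * (b.1 - a.1) = b.1 - y.1 := div_mul_cancel₀ _ hd.ne'
  have hθ0 : 0 ≤ θ := div_nonneg (by linarith) hd.le
  have hθ1 : θ ≤ 1 := (div_le_one hd).2 (by linarith)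
  clear_value θ
  have hcK := hK ha hb hθ0 (sub_nonneg.2 hθ1) (add_sub_cancel θ 1)
  have hc1 : (θ • a + (1 - θ) • b).1 = y.1 := by
    simp only [Prod.fst_add, Prod.smul_fst, smul_eq_mul]
    linear_combination -hθd
  have hc := hy.2 _ hcK hc1
  simp only [Prod.snd_add, Prod.smul_snd, smul_eq_mul] at hc
  have e : (θ * a.2 + (1 - θ) * b.2) * (b.1 - a.1) = (b.1 - y.1) * a.2 + (y.1 - a.1) * b.2 := by
    linear_combination (a.2 - b.2) * hθd
  nlinarith [mul_le_mul_of_nonneg_right hc hd.le]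

theorem exists_isVerticalMin (hK : Convex ℝ K) (hc : IsCompact K) (h0 : (0 : ℝ × ℝ) ∈ K)
    (hp : p ∈ K) (hσ : 0 < σ) (hσp : σ ≤ p.1) : ∃ y, IsVerticalMin K y ∧ y.1 = σ := by
  have hp0 : 0 < p.1 := hσ.trans_le hσp
  have hmem : (σ / p.1) • p ∈ K ∩ {z | z.1 = σ} :=
    ⟨hK.smul_mem_of_zero_mem h0 hp ⟨by positivity, (div_le_one hp0).2 hσp⟩,
      by simp [div_mul_cancel₀ _ hp0.ne']⟩
  obtain ⟨y, ⟨hyK, hyσ⟩, hmin⟩ := (hc.inter_right (isClosed_eq continuous_fst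
    continuous_const)).exists_isMinOn ⟨_, hmem⟩ continuous_snd.continuousOn
  exact ⟨y, ⟨hyK, fun z hz hzy ↦ hmin ⟨hz, hzy.trans hyσ⟩⟩, hyσ⟩

/-- The largest supporting slope at `y` is the infimum of the chord slopes to the right of `y`. -/
theorem IsVerticalMin.exists_max_lowerSupport (hK : Convex ℝ K) (hy : IsVerticalMin K y)
    (ha : a ∈ K) (hb : b ∈ K) (hay : a.1 < y.1) (hyb : y.1 < b.1) :
    ∃ P, IsLowerSupport K P y ∧ ∀ r, IsLowerSupport K r y → r ≤ P := by
  set S := {m | ∃ p ∈ K, y.1 < p.1 ∧ m = (p.2 - y.2) / (p.1 - y.1)}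
  have hS : S.Nonempty := ⟨_, b, hb, hyb, rfl⟩
  have hleft : ∀ c ∈ K, c.1 < y.1 → ∀ m ∈ S, (y.2 - c.2) / (y.1 - c.1) ≤ m := by
    rintro c hc hcy _ ⟨p, hp, hyp, rfl⟩
    rw [div_le_div_iff₀ (by linarith) (by linarith)]
    exact hy.chord_slope_le hK hc hp hcy hyp
  refine ⟨sInf S, ⟨hy.1, fun p hp ↦ ?_⟩, fun r hr ↦ le_csInf hS ?_⟩
  · rcases lt_trichotomy p.1 y.1 with hpy | hpy | hpy
    · have := le_csInf hS (hleft p hp hpy)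
      rw [div_le_iff₀ (by linarith)] at this
      linarith
    · rw [hpy, sub_self, mul_zero, sub_nonneg]
      exact hy.2 p hp hpy
    · have := csInf_le ⟨_, hleft a ha hay⟩ ⟨p, hp, hpy, rfl⟩
      rwa [le_div_iff₀ (by linarith)] at this
  · rintro _ ⟨p, hp, hyp, rfl⟩
    rw [le_div_iff₀ (by linarith)]
    exact hr.2 p hp

theorem supSlope_le_of_max_lowerSupport (hy : IsVerticalMin K y)
    (hP : IsLowerSupport K P y) (hPmax : ∀ r, IsLowerSupport K r y → r ≤ P) (hq₀P : q₀ ≤ P) :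
    supSlope K Q q₀ y.1 ≤ P := by
  refine csSup_le ⟨q₀, mem_insert _ _⟩ ?_
  rintro r (rfl | ⟨p, hr, -, -, hpy⟩)
  · exact hq₀P
  rcases hpy.lt_or_eq with hpy | hpy
  · exact hr.le_of_fst_lt hP hpy
  · have hp : p = y := by
      have h₁ := hr.2 y hy.1
      have h₂ := hy.2 p hr.1 hpy
      rw [hpy, sub_self, mul_zero, sub_nonneg] at h₁
      exact Prod.ext hpy (le_antisymm h₁ h₂)
    exact hPmax r (hp ▸ hr)

theorem supGap_le_supGap_half_add (hK : Convex ℝ K) (hc : IsCompact K)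
    (h₀ : IsLowerSupport K q₀ 0) (hq₀ : |q₀| ≤ Q) (hτ : 0 < τ) :
    supGap K Q τ ≤ supGap K Q (τ / 2) + τ * (supSlope K Q q₀ τ - supSlope K Q q₀ (τ / 2)) := by
  have hmono : supSlope K Q q₀ (τ / 2) ≤ supSlope K Q q₀ τ := supSlope_mono hq₀ (by linarith)
  have hrest : 0 ≤ τ * (supSlope K Q q₀ τ - supSlope K Q q₀ (τ / 2)) :=
    mul_nonneg hτ.le (sub_nonneg.2 hmono)
  refine Real.sSup_le ?_ (add_nonneg (supGap_nonneg h₀.1) hrest)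
  rintro _ ⟨q, p, hq, hqQ, ⟨hp0, hpτ⟩, rfl⟩
  rcases le_or_gt p.1 (τ / 2) with hpτ' | hpτ'
  · linarith [hq.gap_le_supGap hqQ ⟨hp0.le, hpτ'⟩ h₀ hq₀]
  obtain ⟨y, hy, hyσ⟩ := exists_isVerticalMin hK hc h₀.1 hq.1 (half_pos hτ) hpτ'.le
  obtain ⟨P, hP, hPmax⟩ := hy.exists_max_lowerSupport hK h₀.1 hq.1
    (by rw [hyσ]; exact half_pos hτ) (by rw [hyσ]; exact hpτ')
  have hy0 : (0 : ℝ × ℝ).1 < y.1 := by rw [hyσ]; exact half_pos hτ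
  have hq₀P : q₀ ≤ P := h₀.le_of_fst_lt hP hy0
  have hPq : P ≤ q := hP.le_of_fst_lt hq (by rw [hyσ]; exact hpτ')
  have hPQ : |P| ≤ Q := abs_le.2 ⟨(abs_le.1 hq₀).1.trans hq₀P, hPq.trans (abs_le.1 hqQ).2⟩
  have hgap : P * y.1 - y.2 ≤ supGap K Q (τ / 2) :=
    hP.gap_le_supGap hPQ ⟨hy0.le, hyσ.le⟩ h₀ hq₀
  have hslope : supSlope K Q q₀ (τ / 2) ≤ P :=
    hyσ ▸ supSlope_le_of_max_lowerSupport hy hP hPmax hq₀P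
  have hqslope : q ≤ supSlope K Q q₀ τ := hq.le_supSlope hqQ ⟨hp0, hpτ⟩ hq₀
  have hsupp := hP.2 p hq.1
  nlinarith [mul_le_mul_of_nonneg_right (show q - P ≤ _ from sub_le_sub hqslope hslope) hp0.le]

theorem sum_two_pow_mul_supGap_le (hK : Convex ℝ K) (hc : IsCompact K)
    (h₀ : IsLowerSupport K q₀ 0) (hq₀ : |q₀| ≤ Q) (n : ℕ) :
    ∑ k ∈ Finset.range n, 2 ^ k * supGap K Q ((1 / 2) ^ k) ≤ 6 * Q := by
  have hpow : ∀ k : ℕ, (2 : ℝ) ^ k * (1 / 2) ^ k = 1 := fun k ↦ by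
    rw [← mul_pow]; norm_num
  have hstep : ∀ k : ℕ, 2 ^ k * supGap K Q ((1 / 2) ^ k) ≤
      2 ^ (k + 1) * supGap K Q ((1 / 2) ^ (k + 1)) / 2 +
        (supSlope K Q q₀ ((1 / 2) ^ k) - supSlope K Q q₀ ((1 / 2) ^ (k + 1))) := by
    intro k
    have h := supGap_le_supGap_half_add hK hc h₀ hq₀ (by positivity : (0 : ℝ) < (1 / 2) ^ k)
    rw [show (1 / 2 : ℝ) ^ k / 2 = (1 / 2) ^ (k + 1) by rw [pow_succ]; ring] at h
    calc _ ≤ 2 ^ k * (supGap K Q ((1 / 2) ^ (k + 1)) + (1 / 2) ^ k *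
          (supSlope K Q q₀ ((1 / 2) ^ k) - supSlope K Q q₀ ((1 / 2) ^ (k + 1)))) :=
          mul_le_mul_of_nonneg_left h (by positivity)
      _ = _ := by rw [mul_add, ← mul_assoc, hpow, pow_succ]; ring
  have hlast : 2 ^ n * supGap K Q ((1 / 2) ^ n) ≤ 2 * Q := by
    have := mul_le_mul_of_nonneg_left (supGap_le h₀ hq₀ (by positivity : (0 : ℝ) ≤ (1 / 2) ^ n))
      (by positivity : (0 : ℝ) ≤ 2 ^ n)
    calc _ ≤ _ := this
      _ = 2 * Q * (2 ^ n * (1 / 2) ^ n) := by ring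
      _ = 2 * Q := by rw [hpow, mul_one]
  have hslopes : supSlope K Q q₀ ((1 / 2) ^ 0) - supSlope K Q q₀ ((1 / 2) ^ n) ≤ 2 * Q := by
    linarith [supSlope_le (K := K) (τ := (1 / 2) ^ 0) hq₀,
      le_supSlope (K := K) (τ := (1 / 2) ^ n) hq₀, (abs_le.1 hq₀).1]
  linarith [sum_range_le_of_le_half_succ_add n (by simpa using supGap_nonneg h₀.1) hstep hlast
    hslopes]

end LowerSupport

section PlaneCoords

variable {E : Type*} [NormedAddCommGroup E] [InnerProductSpace ℝ E]
  {Ω C : Set E} {x y z₀ u w ν ν₀ : E} {ρ R : ℝ}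

def IsParsevalPair (w u : E) : Prop :=
  ∀ a b : E, ⟪a, b⟫ = ⟪a, w⟫ * ⟪b, w⟫ + ⟪a, u⟫ * ⟪b, u⟫

def planeCoords (x w u z : E) : ℝ × ℝ := (⟪z - x, w⟫, ⟪z - x, u⟫)

theorem IsParsevalPair.neg_left (h : IsParsevalPair w u) : IsParsevalPair (-w) u := by
  intro a b
  simpa only [inner_neg_right, neg_mul_neg] using h a b

theorem IsParsevalPair.abs_inner_left_le (h : IsParsevalPair w u) (a : E) : |⟪a, w⟫| ≤ ‖a‖ :=
  abs_le_of_sq_le_sq (by nlinarith [h a a, real_inner_self_eq_norm_sq a]) (norm_nonneg a)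

theorem IsParsevalPair.abs_inner_right_le (h : IsParsevalPair w u) (a : E) : |⟪a, u⟫| ≤ ‖a‖ :=
  abs_le_of_sq_le_sq (by nlinarith [h a a, real_inner_self_eq_norm_sq a]) (norm_nonneg a)

theorem Convex.image_planeCoords (hC : Convex ℝ C) : Convex ℝ (planeCoords x w u '' C) := by
  rintro _ ⟨a, ha, rfl⟩ _ ⟨b, hb, rfl⟩ s t hs ht hst
  refine ⟨s • a + t • b, hC ha hb hs ht hst, ?_⟩
  have hx : s • a + t • b - x = s • (a - x) + t • (b - x) := by
    calc s • a + t • b - x = s • a + t • b - (s + t) • x := by rw [hst, one_smul]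
      _ = s • (a - x) + t • (b - x) := by module
  simp only [planeCoords, hx, inner_add_left, real_inner_smul_left, Prod.smul_mk, Prod.mk_add_mk,
    smul_eq_mul]

theorem planeCoords_self : planeCoords x w u x = 0 := by
  simp [planeCoords]

theorem isLowerSupport_planeCoords (hw : IsParsevalPair w u) (hνu : ⟪ν, u⟫ < 0) (hy : y ∈ C)
    (hsupp : ∀ z ∈ C, ⟪ν, z - y⟫ ≤ 0) :
    IsLowerSupport (planeCoords x w u '' C) (⟪ν, w⟫ / -⟪ν, u⟫) (planeCoords x w u y) := by
  refine ⟨mem_image_of_mem _ hy, ?_⟩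
  rintro _ ⟨z, hz, rfl⟩
  have h := hsupp z hz
  rw [hw] at h
  simp only [planeCoords, inner_sub_left] at h ⊢
  rw [div_mul_eq_mul_div, div_le_iff₀ (neg_pos.2 hνu)]
  linear_combination h

theorem inner_sub_le_neg_of_closedBall_subset (hρ : 0 ≤ ρ) (hball : Metric.closedBall z₀ ρ ⊆ C)
    (hν : ‖ν‖ = 1) (hsupp : ∀ z ∈ C, ⟪ν, z - y⟫ ≤ 0) : ⟪ν, z₀ - y⟫ ≤ -ρ := by
  have h := hsupp (z₀ + ρ • ν) (hball (by simp [norm_smul, hν, abs_of_nonneg hρ]))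
  rw [add_sub_right_comm, inner_add_right, real_inner_smul_right, real_inner_self_eq_norm_sq, hν]
    at h
  linarith

theorem exists_lowerSupport_planeCoords (hw : IsParsevalPair w u) (hx : x ∈ C) (hρ : 0 < ρ)
    (hball : Metric.closedBall z₀ ρ ⊆ C) (hR : ‖z₀ - x‖ ≤ R) (hu : u = ‖z₀ - x‖⁻¹ • (z₀ - x))
    (hν : ‖ν‖ = 1) (hy : y ∈ C) (hsupp : ∀ z ∈ C, ⟪ν, z - y⟫ ≤ 0) (hlow : ⟪ν, y - x⟫ ≤ ρ / 2) :
    ∃ q, |q| ≤ 2 * R / ρ ∧ IsLowerSupport (planeCoords x w u '' C) q (planeCoords x w u y) ∧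
      ⟪ν, y - x⟫ ≤ q * ⟪y - x, w⟫ - ⟪y - x, u⟫ := by
  have hz₀y := inner_sub_le_neg_of_closedBall_subset hρ.le hball hν hsupp
  have hz₀x : ⟪ν, z₀ - x⟫ ≤ -(ρ / 2) := by
    rw [show z₀ - x = (z₀ - y) + (y - x) by abel, inner_add_right]
    linarith
  have hd : 0 < ‖z₀ - x‖ :=
    norm_pos_iff.2 fun h ↦ by rw [h, inner_zero_right] at hz₀x; linarith
  have hνu : ρ / (2 * R) ≤ -⟪ν, u⟫ := by
    rw [show -⟪ν, u⟫ = -⟪ν, z₀ - x⟫ / ‖z₀ - x‖ by rw [hu, real_inner_smul_right]; ring]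
    calc ρ / (2 * R) ≤ ρ / 2 / ‖z₀ - x‖ := by rw [div_div]; gcongr
      _ ≤ -⟪ν, z₀ - x⟫ / ‖z₀ - x‖ := by gcongr; linarith
  have hνu₀ : 0 < -⟪ν, u⟫ := lt_of_lt_of_le (by have := hd.trans_le hR; positivity) hνu
  have hsl := isLowerSupport_planeCoords (x := x) hw (neg_pos.1 hνu₀) hy hsupp
  refine ⟨_, ?_, hsl, ?_⟩
  · rw [abs_div, abs_of_pos hνu₀, div_le_iff₀ hνu₀]
    have hR₀ : 0 < R := hd.trans_le hR
    calc |⟪ν, w⟫| ≤ 1 := hν ▸ hw.abs_inner_left_le ν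
      _ = 2 * R / ρ * (ρ / (2 * R)) := by field_simp
      _ ≤ 2 * R / ρ * -⟪ν, u⟫ := by gcongr
  · have hgap := hsl.gap_nonneg (planeCoords_self (w := w) (u := u) ▸ mem_image_of_mem _ hx)
    simp only [planeCoords] at hgap
    have hνu₁ : -⟪ν, u⟫ ≤ 1 := (neg_le_abs _).trans (hν ▸ hw.abs_inner_right_le ν)
    calc ⟪ν, y - x⟫ = -⟪ν, u⟫ * (⟪ν, w⟫ / -⟪ν, u⟫ * ⟪y - x, w⟫ - ⟪y - x, u⟫) := by
          rw [hw, mul_sub, ← mul_assoc, mul_div_cancel₀ _ hνu₀.ne']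
          ring
      _ ≤ _ := mul_le_of_le_one_left hgap hνu₁

theorem IsOuterNormal.inner_sub_nonpos_of_mem_closure (h : IsOuterNormal Ω y ν) {z : E}
    (hz : z ∈ closure Ω) : ⟪ν, z - y⟫ ≤ 0 :=
  closure_minimal (t := {z | ⟪ν, z - y⟫ ≤ 0}) h.2 (isClosed_le (by fun_prop) continuous_const) hz

theorem exists_isOuterNormal_of_notMem [CompleteSpace E] (hconv : Convex ℝ Ω) (hopen : IsOpen Ω)
    (hne : Ω.Nonempty) (hx : x ∉ Ω) : ∃ ν, IsOuterNormal Ω x ν := by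
  obtain ⟨f, hf⟩ := geometric_hahn_banach_open_point hconv hopen hx
  set ν := (InnerProductSpace.toDual ℝ E).symm f
  have hνf : ∀ z, ⟪ν, z⟫ = f z := fun z ↦ InnerProductSpace.toDual_symm_apply
  have hν : ν ≠ 0 := by
    rintro h
    obtain ⟨z, hz⟩ := hne
    have := hf z hz
    rw [← hνf, ← hνf, h, inner_zero_left, inner_zero_left] at this
    exact lt_irrefl _ this
  refine ⟨‖ν‖⁻¹ • ν, norm_smul_inv_norm hν, fun z hz ↦ ?_⟩
  rw [real_inner_smul_left, inner_sub_right, hνf, hνf]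
  exact mul_nonpos_of_nonneg_of_nonpos (by positivity) (by linarith [hf z hz])

theorem IsOuterNormal.exists_lowerSupport_planeCoords_zero (hν₀ : IsOuterNormal Ω x ν₀)
    (hw : IsParsevalPair w u) (hx : x ∈ closure Ω) (hρ : 0 < ρ)
    (hball : Metric.closedBall z₀ ρ ⊆ closure Ω) (hR : ‖z₀ - x‖ ≤ R)
    (hu : u = ‖z₀ - x‖⁻¹ • (z₀ - x)) :
    ∃ q₀, |q₀| ≤ 2 * R / ρ ∧ IsLowerSupport (planeCoords x w u '' closure Ω) q₀ 0 := by
  obtain ⟨q₀, hq₀, h₀, -⟩ := exists_lowerSupport_planeCoords hw hx hρ hball hR hu hν₀.1 hx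
    (fun _ hz ↦ hν₀.inner_sub_nonpos_of_mem_closure hz)
    (by rw [sub_self, inner_zero_right]; positivity)
  rw [planeCoords_self] at h₀
  exact ⟨q₀, hq₀, h₀⟩

theorem inner_sub_le_supGap_add (hw : IsParsevalPair w u) (hx : x ∈ closure Ω) (hρ : 0 < ρ)
    (hball : Metric.closedBall z₀ ρ ⊆ closure Ω) (hR : ‖z₀ - x‖ ≤ R)
    (hu : u = ‖z₀ - x‖⁻¹ • (z₀ - x)) (hν₀ : IsOuterNormal Ω x ν₀) (hy : y ∈ closure Ω)
    (hν : IsOuterNormal Ω y ν) (hlow : ⟪ν, y - x⟫ ≤ ρ / 2) {τ : ℝ} (hyτ : ‖y - x‖ ≤ τ) :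
    ⟪ν, y - x⟫ ≤ supGap (planeCoords x w u '' closure Ω) (2 * R / ρ) τ +
      supGap (planeCoords x (-w) u '' closure Ω) (2 * R / ρ) τ := by
  obtain ⟨q₁, hq₁, h₁⟩ := hν₀.exists_lowerSupport_planeCoords_zero hw hx hρ hball hR hu
  obtain ⟨q₂, hq₂, h₂⟩ := hν₀.exists_lowerSupport_planeCoords_zero hw.neg_left hx hρ hball hR hu
  have hsupp : ∀ z ∈ closure Ω, ⟪ν, z - y⟫ ≤ 0 := fun _ ↦ hν.inner_sub_nonpos_of_mem_closure
  rcases le_total 0 ⟪y - x, w⟫ with hs | hs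
  · obtain ⟨q, hqQ, hq, hle⟩ :=
      exists_lowerSupport_planeCoords hw hx hρ hball hR hu hν.1 hy hsupp hlow
    have := hq.gap_le_supGap hqQ
      ⟨hs, (le_abs_self _).trans ((hw.abs_inner_left_le _).trans hyτ)⟩ h₁ hq₁
    linarith [hle.trans this, supGap_nonneg (Q := 2 * R / ρ) (τ := τ) h₂.1]
  · obtain ⟨q, hqQ, hq, hle⟩ :=
      exists_lowerSupport_planeCoords hw.neg_left hx hρ hball hR hu hν.1 hy hsupp hlow
    have := hq.gap_le_supGap hqQ ⟨by simp only [planeCoords, inner_neg_right]; linarith,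
      (le_abs_self _).trans ((hw.neg_left.abs_inner_left_le _).trans hyτ)⟩ h₂ hq₂
    linarith [hle.trans this, supGap_nonneg (Q := 2 * R / ρ) (τ := τ) h₁.1]

theorem Mfun_le_supGap_add (hw : IsParsevalPair w u) (hx : x ∈ closure Ω) (hρ : 0 < ρ)
    (hball : Metric.closedBall z₀ ρ ⊆ closure Ω) (hR : ‖z₀ - x‖ ≤ R)
    (hu : u = ‖z₀ - x‖⁻¹ • (z₀ - x)) (hν₀ : IsOuterNormal Ω x ν₀) {k : ℕ} {t : ℝ}
    (ht : t ≤ (1 / 2) ^ k) :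
    Mfun Ω x t ≤ supGap (planeCoords x w u '' closure Ω) (2 * R / ρ) ((1 / 2) ^ k) +
      supGap (planeCoords x (-w) u '' closure Ω) (2 * R / ρ) ((1 / 2) ^ k) +
        2 / ρ * (1 / 4) ^ k := by
  obtain ⟨q₁, -, h₁⟩ := hν₀.exists_lowerSupport_planeCoords_zero hw hx hρ hball hR hu
  obtain ⟨q₂, -, h₂⟩ := hν₀.exists_lowerSupport_planeCoords_zero hw.neg_left hx hρ hball hR hu
  have hgap₁ := supGap_nonneg (Q := 2 * R / ρ) (τ := (1 / 2) ^ k) h₁.1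
  have hgap₂ := supGap_nonneg (Q := 2 * R / ρ) (τ := (1 / 2) ^ k) h₂.1
  have hfar : 0 ≤ 2 / ρ * (1 / 4 : ℝ) ^ k := by positivity
  refine Real.sSup_le ?_ (by positivity)
  rintro _ ⟨y, ν, hy, -, hyt, hν, rfl⟩
  have hyk : ‖y - x‖ ≤ (1 / 2) ^ k := hyt.trans ht
  rcases le_or_gt ⟪ν, y - x⟫ (ρ / 2) with hlow | hhigh
  · exact le_add_of_le_of_nonneg (inner_sub_le_supGap_add hw hx hρ hball hR hu hν₀
      (frontier_subset_closure hy) hν hlow hyk) hfar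
  have hm : ⟪ν, y - x⟫ ≤ (1 / 2) ^ k :=
    (real_inner_le_norm _ _).trans (by rw [hν.1, one_mul]; exact hyk)
  refine le_add_of_nonneg_of_le (add_nonneg hgap₁ hgap₂) ?_
  calc ⟪ν, y - x⟫ ≤ 2 / ρ * ⟪ν, y - x⟫ ^ 2 := by
        rw [div_mul_eq_mul_div, le_div_iff₀ hρ]; nlinarith
    _ ≤ 2 / ρ * ((1 / 2) ^ k) ^ 2 := by gcongr; linarith
    _ = 2 / ρ * (1 / 4) ^ k := by rw [← pow_mul, mul_comm k 2, pow_mul]; norm_num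

theorem lintegral_Mfun_div_sq_le (hw : IsParsevalPair w u) (hconv : Convex ℝ Ω)
    (hcomp : IsCompact (closure Ω)) (hx : x ∈ closure Ω) (hρ : 0 < ρ)
    (hball : Metric.closedBall z₀ ρ ⊆ closure Ω) (hR : ‖z₀ - x‖ ≤ R)
    (hu : u = ‖z₀ - x‖⁻¹ • (z₀ - x)) (hν₀ : IsOuterNormal Ω x ν₀) :
    ∫⁻ t in Ioo (0 : ℝ) 1, ENNReal.ofReal (Mfun Ω x t / t ^ 2) ≤
      ENNReal.ofReal (2 * (12 * (2 * R / ρ) + 4 / ρ)) := by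
  obtain ⟨q₁, hq₁, h₁⟩ := hν₀.exists_lowerSupport_planeCoords_zero hw hx hρ hball hR hu
  obtain ⟨q₂, hq₂, h₂⟩ := hν₀.exists_lowerSupport_planeCoords_zero hw.neg_left hx hρ hball hR hu
  have hcont : ∀ w' : E, Continuous (planeCoords x w' u) := fun _ ↦ by
    unfold planeCoords; fun_prop
  refine lintegral_Ioo_div_sq_le
    (fun k ↦ add_nonneg (add_nonneg (supGap_nonneg h₁.1) (supGap_nonneg h₂.1)) (by positivity))
    (fun k t _ ht ↦ Mfun_le_supGap_add hw hx hρ hball hR hu hν₀ ht) fun n ↦ ?_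
  have hsum₁ := sum_two_pow_mul_supGap_le hconv.closure.image_planeCoords
    (hcomp.image (hcont w)) h₁ hq₁ n
  have hsum₂ := sum_two_pow_mul_supGap_le hconv.closure.image_planeCoords
    (hcomp.image (hcont (-w))) h₂ hq₂ n
  have hsum₃ : ∑ k ∈ Finset.range n, 2 ^ k * (2 / ρ * (1 / 4 : ℝ) ^ k) ≤ 4 / ρ :=
    calc _ = 2 / ρ * ∑ k ∈ Finset.range n, (1 / 2 : ℝ) ^ k := by
          rw [Finset.mul_sum]
          refine Finset.sum_congr rfl fun k _ ↦ ?_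
          have h : (2 : ℝ) ^ k * (1 / 2) ^ k = 1 := by rw [← mul_pow]; norm_num
          rw [show (1 / 4 : ℝ) = 1 / 2 * (1 / 2) by norm_num, mul_pow]
          linear_combination (2 / ρ * (1 / 2) ^ k) * h
      _ ≤ 2 / ρ * 2 := by gcongr; exact sum_geometric_two_le n
      _ = 4 / ρ := by ring
  simp only [mul_add, Finset.sum_add_distrib]
  linarith

end PlaneCoords

theorem exists_isParsevalPair {u : EuclideanSpace ℝ (Fin 2)} (hu : ‖u‖ = 1) :
    ∃ w, IsParsevalPair w u := by
  have hinner : ∀ a b : EuclideanSpace ℝ (Fin 2), ⟪a, b⟫ = a 0 * b 0 + a 1 * b 1 := fun a b ↦ by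
    simp [PiLp.inner_apply, Fin.sum_univ_two, mul_comm]
  have hu2 : u 0 * u 0 + u 1 * u 1 = 1 := by
    rw [← hinner, real_inner_self_eq_norm_sq, hu, one_pow]
  refine ⟨!₂[-u 1, u 0], fun a b ↦ ?_⟩
  simp only [hinner, Fin.isValue, Matrix.cons_val_zero, mul_neg, Matrix.cons_val_one,
    Matrix.cons_val_fin_one]
  linear_combination -(a 0 * b 0 + a 1 * b 1) * hu2

/-- The Dini condition holds for all planar convex domains (Proposition 7.2). -/
theorem dini_planar (Ω : Set (EuclideanSpace ℝ (Fin 2)))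
    (hopen : IsOpen Ω) (hbdd : Bornology.IsBounded Ω)
    (hconv : Convex ℝ Ω) (hne : Ω.Nonempty) :
    ∃ Cstar : ℝ, ∀ x ∈ frontier Ω,
      ∫⁻ t in Ioo (0:ℝ) 1, ENNReal.ofReal (Mfun Ω x t / t ^ 2) ≤ ENNReal.ofReal Cstar := by
  obtain ⟨z₀, hz₀⟩ := hne
  obtain ⟨ρ, hρ, hball⟩ := Metric.isOpen_iff.1 hopen z₀ hz₀
  obtain ⟨R, hR⟩ := hbdd.subset_closedBall z₀
  refine ⟨2 * (12 * (2 * R / ρ) + 4 / ρ), fun x hx ↦ ?_⟩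
  have hxΩ : x ∉ Ω := (hopen.frontier_eq ▸ hx).2
  have hxC : x ∈ closure Ω := frontier_subset_closure hx
  obtain ⟨w, hw⟩ := exists_isParsevalPair (norm_smul_inv_norm (𝕜 := ℝ) (sub_ne_zero.2
    (ne_of_mem_of_not_mem hz₀ hxΩ)))
  obtain ⟨ν₀, hν₀⟩ := exists_isOuterNormal_of_notMem hconv hopen ⟨z₀, hz₀⟩ hxΩ
  refine lintegral_Mfun_div_sq_le hw hconv hbdd.isCompact_closure hxC hρ ?_ ?_ rfl hν₀
  · rw [← closure_ball z₀ hρ.ne']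
    exact closure_mono hball
  · rw [← dist_eq_norm, ← Metric.mem_closedBall']
    exact closure_minimal hR Metric.isClosed_closedBall hxC
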